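/- Let $a \geq 1$ and $n \geq 1$ be arbitrary integers and set $k = 2^a$. Let $A = (\mathbb{Z}_k)^n$. Then $s(A) = (k-1)2^n + 1$. -/

import Mathlib

/-- The Erdős–Ginzburg–Ziv constant `s(A)`: the smallest `ℓ ∈ ℕ` such that every
multiset `S` over `A` of length `≥ ℓ` has a zero-sum sub-multiset of length `exp(A)`. -/
noncomputable def EGZ (A : Type) [AddCommGroup A] : ℕ :=
  sInf {ℓ : ℕ | ∀ S : Multiset A, ℓ ≤ Multiset.card S →
    ∃ T ≤ S, Multiset.card T = AddMonoid.exponent A ∧ T.sum = 0}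

/-!
Reducing modulo `k` maps `ℤ_{2k}ⁿ` onto `ℤ_kⁿ` with kernel `k·ℤ_{2k}ⁿ ≅ ℤ_2ⁿ`. Given `s(ℤ_kⁿ)`, one
extracts greedily `2ⁿ + 1` disjoint blocks of length `k` whose sums lie in the kernel; by pigeonhole
two block sums coincide there, so their union is a zero-sum subsequence of length `2k`. Hence
`s(ℤ_{2k}ⁿ) ≤ 2ⁿ k + s(ℤ_kⁿ) - 1`, and induction on `a` gives `s(ℤ_{2^a}ⁿ) ≤ (2^a - 1) 2ⁿ + 1`.
Conversely, take `2^a - 1` copies of every `0/1`-vector: a zero-sum subsequence of length `2^a` has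
`0` or `2^a` ones in each coordinate, so it would consist of `2^a` copies of one vector.
-/

open Multiset

def HasZeroSumOfCard (A : Type*) [AddCommGroup A] (ℓ e : ℕ) : Prop :=
  ∀ S : Multiset A, ℓ ≤ card S → ∃ T ≤ S, card T = e ∧ T.sum = 0

namespace Multiset

variable {α β : Type*}

theorem exists_le_map_eq_of_le_map (f : α → β) {T : Multiset β} :
    ∀ {S : Multiset α}, T ≤ S.map f → ∃ U ≤ S, U.map f = T := by
  classical
  induction T using Multiset.induction with
  | empty => exact fun {S} _ => ⟨0, zero_le S, rfl⟩
  | cons b T ih =>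
    intro S h
    obtain ⟨x, hxS, rfl⟩ := mem_map.mp (mem_of_le h (mem_cons_self _ T))
    rw [← cons_erase hxS, map_cons, cons_le_cons_iff] at h
    obtain ⟨U, hU, rfl⟩ := ih h
    exact ⟨x ::ₘ U, (cons_le_cons x hU).trans_eq (cons_erase hxS), map_cons f x U⟩

theorem exists_eq_cons_cons_of_card_lt [Fintype α] {S : Multiset α}
    (h : Fintype.card α < card S) : ∃ x t, S = x ::ₘ x ::ₘ t := by
  classical
  by_contra! hS
  have := toFinset_card_of_nodup (nodup_iff_ne_cons_cons.mpr hS) ▸ S.toFinset.card_le_univ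
  omega

theorem join_le_join {S T : Multiset (Multiset α)} (h : S ≤ T) : S.join ≤ T.join := by
  obtain ⟨U, rfl⟩ := le_iff_exists_add.mp h
  rw [join_add]
  exact le_add_right _ _

theorem forall_or_forall_not_of_card_dvd_countP {p : α → Prop} [DecidablePred p]
    {s : Multiset α} (h : card s ∣ countP p s) :
    (∀ a ∈ s, p a) ∨ ∀ a ∈ s, ¬p a := by
  rcases Nat.eq_zero_or_pos (countP p s) with h0 | hpos
  · exact Or.inr (countP_eq_zero.mp h0)
  · exact Or.inl (countP_eq_card.mp ((countP_le_card p s).antisymm (Nat.le_of_dvd hpos h)))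

end Multiset

namespace HasZeroSumOfCard

variable {G H Q : Type*} [AddCommGroup G] [AddCommGroup H] [AddCommGroup Q] {ℓ e : ℕ}

theorem mono (h : HasZeroSumOfCard G ℓ e) {ℓ' : ℕ} (hℓ : ℓ ≤ ℓ') : HasZeroSumOfCard G ℓ' e :=
  fun S hS => h S (hℓ.trans hS)

theorem of_subsingleton [Subsingleton G] : HasZeroSumOfCard G 1 1 := fun S hS => by
  obtain ⟨x, hx⟩ := card_pos_iff_exists_mem.mp hS
  exact ⟨{x}, singleton_le.mpr hx, card_singleton x, Subsingleton.elim _ _⟩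

theorem of_add_self_eq_zero [Fintype G] (h : ∀ x : G, x + x = 0) :
    HasZeroSumOfCard G (Fintype.card G + 1) 2 := fun S hS => by
  obtain ⟨x, t, rfl⟩ := exists_eq_cons_cons_of_card_lt hS
  exact ⟨x ::ₘ x ::ₘ 0, cons_le_cons _ (cons_le_cons _ (zero_le t)), rfl, by simp [h]⟩

theorem exists_blocks_in_ker (φ : G →+ Q) (hQ : HasZeroSumOfCard Q ℓ e) (m : ℕ) (S : Multiset G)
    (hS : m * e + ℓ ≤ card S + e) :
    ∃ B : Multiset (Multiset G), card B = m ∧ B.join ≤ S ∧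
      ∀ b ∈ B, card b = e ∧ φ b.sum = 0 := by
  classical
  induction m generalizing S with
  | zero => exact ⟨0, rfl, by simp, by simp⟩
  | succ m ih =>
    obtain ⟨T, hT, hTcard, hTsum⟩ := hQ (S.map φ) (by rw [card_map]; rw [add_one_mul] at hS; omega)
    obtain ⟨b, hb, rfl⟩ := exists_le_map_eq_of_le_map φ hT
    rw [card_map] at hTcard
    have hbS := card_le_card hb
    obtain ⟨B, hB, hBS, hBb⟩ := ih (S - b) (by
      rw [card_sub hb, ← hTcard]; rw [add_one_mul, ← hTcard] at hS; omega)
    refine ⟨b ::ₘ B, by rw [card_cons, hB], ?_, ?_⟩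
    · rw [join_cons]
      exact (add_le_add_right hBS b).trans_eq (add_tsub_cancel_of_le hb)
    · intro c hc
      rcases mem_cons.mp hc with rfl | hc
      · exact ⟨hTcard, by rw [map_multiset_sum, hTsum]⟩
      · exact hBb c hc

theorem of_ker_le_range (φ : G →+ Q) (ι : H →+ G) (hφι : φ.ker ≤ ι.range)
    {ℓH eH ℓQ eQ : ℕ} (hH : HasZeroSumOfCard H ℓH eH) (hQ : HasZeroSumOfCard Q ℓQ eQ) :
    HasZeroSumOfCard G ((ℓH - 1) * eQ + ℓQ) (eH * eQ) := by
  intro S hS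
  obtain ⟨B, hBcard, hBS, hB⟩ := exists_blocks_in_ker φ hQ ℓH S (by
    have : ℓH * eQ ≤ (ℓH - 1) * eQ + eQ := by
      rw [← add_one_mul]; exact Nat.mul_le_mul_right _ (by omega)
    omega)
  set lift : G → H := Function.invFun ι
  have hlift : ∀ b ∈ B, ι (lift b.sum) = b.sum := fun b hb =>
    Function.invFun_eq (hφι (hB b hb).2)
  obtain ⟨T, hT, hTcard, hTsum⟩ := hH (B.map (lift ∘ sum)) (by rw [card_map, hBcard])
  obtain ⟨C, hCB, rfl⟩ := exists_le_map_eq_of_le_map _ hT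
  have hC : ∀ b ∈ C, b ∈ B := fun b hb => mem_of_le hCB hb
  refine ⟨C.join, (join_le_join hCB).trans hBS, ?_, ?_⟩
  · rw [card_map] at hTcard
    rw [card_join, map_congr rfl fun b hb => (hB b (hC b hb)).1, map_const', sum_replicate,
      hTcard, smul_eq_mul]
  · rw [sum_join, ← map_congr rfl fun b hb => hlift b (hC b hb)]
    change (C.map (ι ∘ (lift ∘ sum))).sum = 0
    rw [← map_map, ← map_multiset_sum, hTsum, _root_.map_zero]

end HasZeroSumOfCard

theorem AddMonoidHom.ker_compLeft_le_range_compLeft {α β γ : Type*} [AddGroup α] [AddGroup β]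
    [AddGroup γ] {f : β →+ γ} {g : α →+ β} (h : f.ker ≤ g.range) (I : Type*) :
    (f.compLeft I).ker ≤ (g.compLeft I).range := fun y hy => by
  choose x hx using fun i => h (show f (y i) = 0 from congrFun hy i)
  exact ⟨x, funext hx⟩

namespace ZMod

def scaleHom (m k : ℕ) : ZMod m →+ ZMod (m * k) :=
  lift m ⟨(AddMonoidHom.mulLeft (k : ZMod (m * k))).comp (Int.castAddHom _), by
    simp [← Nat.cast_mul, mul_comm]⟩

theorem scaleHom_intCast (m k : ℕ) (j : ℤ) : scaleHom m k j = k * j :=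
  lift_coe _ _ j

theorem ker_castHom_le_range_scaleHom (m k : ℕ) :
    (ZMod.castHom (dvd_mul_left k m) (ZMod k)).toAddMonoidHom.ker ≤ (scaleHom m k).range := by
  intro y hy
  obtain ⟨j, rfl⟩ := ZMod.intCast_surjective y
  obtain ⟨j', rfl⟩ := (ZMod.intCast_zmod_eq_zero_iff_dvd j k).mp (by simpa using hy)
  exact ⟨j', by rw [scaleHom_intCast]; push_cast; rfl⟩

end ZMod

namespace HasZeroSumOfCard

theorem pi_zmod_mul (I : Type*) {m k ℓm ℓk : ℕ} (hm : HasZeroSumOfCard (I → ZMod m) ℓm m)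
    (hk : HasZeroSumOfCard (I → ZMod k) ℓk k) :
    HasZeroSumOfCard (I → ZMod (m * k)) ((ℓm - 1) * k + ℓk) (m * k) :=
  of_ker_le_range _ _
    (AddMonoidHom.ker_compLeft_le_range_compLeft (ZMod.ker_castHom_le_range_scaleHom m k) I) hm hk

theorem pi_zmod_two (I : Type*) [Fintype I] :
    HasZeroSumOfCard (I → ZMod 2) (2 ^ Fintype.card I + 1) 2 := by
  classical
  simpa [Fintype.card_fun] using
    of_add_self_eq_zero (G := I → ZMod 2) fun x => funext fun i => CharTwo.add_self_eq_zero (x i)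

theorem pi_zmod_two_pow (I : Type*) [Fintype I] (a : ℕ) :
    HasZeroSumOfCard (I → ZMod (2 ^ a)) ((2 ^ a - 1) * 2 ^ Fintype.card I + 1) (2 ^ a) := by
  induction a with
  | zero =>
    have : Subsingleton (ZMod (2 ^ 0)) := ZMod.subsingleton_iff.mpr rfl
    exact of_subsingleton.mono (by simp)
  | succ a ih =>
    rw [pow_succ']
    refine (pi_zmod_mul I (pi_zmod_two I) ih).mono (le_of_eq ?_)
    have h1 : 1 ≤ 2 ^ a := Nat.one_le_two_pow
    have h2 : 1 ≤ 2 * 2 ^ a := by omega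
    rw [Nat.add_sub_cancel]
    zify [h1, h2]
    ring

end HasZeroSumOfCard

theorem Multiset.sum_map_indicator_apply {I : Type*} [DecidableEq I] (k : ℕ)
    (U : Multiset (Finset I)) (i : I) :
    (U.map fun s j => if j ∈ s then (1 : ZMod k) else 0).sum i = (U.countP (i ∈ ·) : ZMod k) := by
  induction U using Multiset.induction with
  | empty => simp
  | cons s U ih =>
    rw [map_cons, sum_cons, Pi.add_apply, ih, countP_cons]
    split_ifs <;> push_cast <;> ring

theorem not_hasZeroSumOfCard_pi_zmod (I : Type*) [Fintype I] (k : ℕ) [NeZero k] :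
    ¬HasZeroSumOfCard (I → ZMod k) ((k - 1) * 2 ^ Fintype.card I) k := by
  classical
  intro h
  set ψ : Finset I → I → ZMod k := fun s j => if j ∈ s then 1 else 0
  obtain ⟨T, hT, hTcard, hTsum⟩ :=
    h (((k - 1) • (Finset.univ : Finset (Finset I)).val).map ψ) (by simp)
  obtain ⟨U, hU, rfl⟩ := exists_le_map_eq_of_le_map ψ hT
  rw [card_map] at hTcard
  have hcoord (i : I) : (∀ s ∈ U, i ∈ s) ∨ ∀ s ∈ U, i ∉ s := by
    refine forall_or_forall_not_of_card_dvd_countP ?_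
    rw [hTcard, ← ZMod.natCast_eq_zero_iff, ← sum_map_indicator_apply, hTsum, Pi.zero_apply]
  obtain ⟨s₀, hs₀⟩ := card_pos_iff_exists_mem.mp (hTcard ▸ NeZero.pos k)
  have hconst : U = replicate k s₀ := eq_replicate.mpr ⟨hTcard, fun s hs => by
    ext i
    rcases hcoord i with hi | hi <;> simp [hi s hs, hi s₀ hs₀]⟩
  have hcount := count_le_of_le s₀ hU
  rw [hconst, count_replicate_self, count_nsmul, count_univ, mul_one] at hcount
  have := NeZero.pos k
  omega

theorem AddMonoid.exponent_pi_const (I : Type*) [Nonempty I] (M : Type*) [AddMonoid M] :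
    AddMonoid.exponent (I → M) = AddMonoid.exponent M := by
  refine Nat.dvd_antisymm (AddMonoid.exponent_dvd_of_forall_nsmul_eq_zero fun x => funext fun i =>
    AddMonoid.exponent_nsmul_eq_zero (x i)) ?_
  inhabit I
  exact AddMonoidHom.exponent_dvd (f := Pi.evalAddMonoidHom (fun _ => M) default)
    (Function.surjective_eval default)

theorem EGZ_eq_succ_of_hasZeroSumOfCard {A : Type} [AddCommGroup A] {ℓ : ℕ}
    (h : HasZeroSumOfCard A (ℓ + 1) (AddMonoid.exponent A))
    (h' : ¬HasZeroSumOfCard A ℓ (AddMonoid.exponent A)) : EGZ A = ℓ + 1 :=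
  (Nat.sInf_le h).antisymm (le_csInf ⟨_, h⟩ fun _ hb =>
    Nat.succ_le_of_lt (lt_of_not_ge fun hbℓ => h' (HasZeroSumOfCard.mono hb hbℓ)))

theorem harborth_two_power_general (a n : ℕ) (hn : 1 ≤ n) :
    EGZ (Fin n → ZMod (2 ^ a)) = (2 ^ a - 1) * 2 ^ n + 1 := by
  have : Nonempty (Fin n) := ⟨⟨0, hn⟩⟩
  have hexp : AddMonoid.exponent (Fin n → ZMod (2 ^ a)) = 2 ^ a := by
    rw [AddMonoid.exponent_pi_const, ZMod.exponent]
  refine EGZ_eq_succ_of_hasZeroSumOfCard ?_ ?_ <;> rw [hexp]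
  · simpa using HasZeroSumOfCard.pi_zmod_two_pow (Fin n) a
  · simpa using not_hasZeroSumOfCard_pi_zmod (Fin n) (2 ^ a)

theorem harborth_two_power (a n : ℕ) (ha : 1 ≤ a) (hn : 1 ≤ n) :
    EGZ (Fin n → ZMod (2 ^ a)) = (2 ^ a - 1) * 2 ^ n + 1 :=
  harborth_two_power_general a n hn
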